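/- arXiv:2402.08701 — 2 statements merged into one kernel-verified Lean document; each statement's English description precedes it below -/
import Mathlib

section
/- For any integer d ≥ 2, with a₁ = 1/(d(1+1/(d-1))^{d-1} - (d-1)) and a_ℓ = a₁(1+1/(d-1))^{ℓ-1} for 1 ≤ ℓ ≤ d, the quantity C(d) := 1 - (d-1)/(d(1+1/(d-1))^{d-1}) satisfies d·a_{ℓ+1} + 1 - a₁(d(1+1/(d-1))^ℓ - (d-1)) = 1/C(d) for every 0 ≤ ℓ ≤ d-1. -/
theorem stmt_0 (d : ℕ) (hd : 2 ≤ d) (ℓ : ℕ) (hℓ : ℓ ≤ d - 1) :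
    let D : ℝ := d
    let a₁ : ℝ := 1 / (D * (1 + 1 / (D - 1)) ^ (d - 1) - (D - 1))
    let C : ℝ := 1 - (D - 1) / (D * (1 + 1 / (D - 1)) ^ (d - 1))
    D * (a₁ * (1 + 1 / (D - 1)) ^ ℓ) + 1
      - a₁ * (D * (1 + 1 / (D - 1)) ^ ℓ - (D - 1)) = 1 / C := by
  intro D a₁ C
  have hD : (2 : ℝ) ≤ D := by simp only [D]; exact_mod_cast hd
  have hP : (1 : ℝ) ≤ (1 + 1 / (D - 1)) ^ (d - 1) := by
    apply one_le_pow₀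
    have : 0 ≤ 1 / (D - 1) := by apply div_nonneg <;> linarith
    linarith
  have hden : D * (1 + 1 / (D - 1)) ^ (d - 1) - (D - 1) ≥ 1 := by nlinarith
  have hden0 : D * (1 + 1 / (D - 1)) ^ (d - 1) - (D - 1) ≠ 0 := by linarith
  have hDP : D * (1 + 1 / (D - 1)) ^ (d - 1) ≠ 0 := by nlinarith
  have hC : C ≠ 0 := by
    have : C = (D * (1 + 1 / (D - 1)) ^ (d - 1) - (D - 1)) /
        (D * (1 + 1 / (D - 1)) ^ (d - 1)) := by
      simp only [C]; rw [one_sub_div hDP]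
    rw [this]
    exact div_ne_zero hden0 hDP
  simp only [a₁, C]
  field_simp
  ring
end

section
/- Let C > 1 and B > 0. Suppose y ≥ 0, b > 0 and s ≥ 0. If C^{b/B} ≤ 1 + b/B and y ≥ (1/(C-1))(C^{s/B} - 1), then y(1+b/B) + (b/B)/(C-1) ≥ (1/(C-1))(C^{(s+b)/B} - 1). -/
theorem stmt_10 (C B b s y : ℝ) (hC : 1 < C) (hB : 0 < B) (hb : 0 < b)
    (hs : 0 ≤ s) (hy0 : 0 ≤ y)
    (hy : y ≥ (1 / (C - 1)) * (C ^ (s / B) - 1))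
    (hkey : C ^ (b / B) ≤ 1 + b / B) :
    y * (1 + b / B) + (b / B) / (C - 1) ≥ (1 / (C - 1)) * (C ^ ((s + b) / B) - 1) := by
  have hCpos : (0:ℝ) < C := lt_trans one_pos hC
  have hC1 : (0:ℝ) < C - 1 := by linarith
  have hsplit : (C:ℝ) ^ ((s + b) / B) = C ^ (s / B) * C ^ (b / B) := by
    rw [← Real.rpow_add hCpos]; ring_nf
  have h1 : (1:ℝ) ≤ C ^ (s / B) := Real.one_le_rpow hC.le (by positivity)
  have hbB : 0 < b / B := by positivity
  rw [hsplit, ge_iff_le, div_mul_eq_mul_div, div_le_iff₀ hC1] at *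
  nlinarith [mul_le_mul_of_nonneg_left hkey (by positivity : (0:ℝ) ≤ C ^ (s / B)),
    mul_le_mul_of_nonneg_right hy (by positivity : (0:ℝ) ≤ 1 + b / B),
    div_mul_cancel₀ (b / B) (ne_of_gt hC1)]
end
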